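/- Let A be a regularly G-graded algebra with commutation function θ, B any G-graded algebra, and let A ⊗̂ B denote the G-graded algebra with (A ⊗̂ B)_g = A_g ⊗ B_g. For a multilinear G-graded polynomial f = Σ_σ λ_σ x_{g_{σ(1)},σ(1)}⋯x_{g_{σ(n)},σ(n)}, define f^θ = Σ_σ λ_σ θ(ḡ,σ)^{-1} x_{g_{σ(1)},σ(1)}⋯x_{g_{σ(n)},σ(n)}. Then f^θ is a G-graded identity of B if and only if f is a G-graded identity of A ⊗̂ B. -/

import Mathlib

/-- The ordered product of a tuple of elements of a (not necessarily commutative) monoid. -/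
def tupProd {M : Type*} [Monoid M] {n : ℕ} (a : Fin n → M) : M := (List.ofFn a).prod

/-- `σ ∈ Sym(ḡ)`: the permutation `σ` is admissible for the tuple `ḡ`, i.e. the products
`g_1 ⋯ g_n` and `g_{σ(1)} ⋯ g_{σ(n)}` coincide. -/
def Admissible {G : Type*} [Group G] {n : ℕ} (g : Fin n → G) (σ : Equiv.Perm (Fin n)) : Prop :=
  tupProd g = tupProd (g ∘ σ)

/-- `θ` is the commutation function of the regular `G`-grading `Ag` on the `F`-algebra `A`. -/
structure IsRegularGradingWith (F : Type) [Field F] (G : Type) [Group G] [DecidableEq G]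
    (A : Type) [Ring A] [Algebra F A] (Ag : G → Submodule F A)
    (θ : ∀ n : ℕ, (Fin n → G) → Equiv.Perm (Fin n) → Fˣ) : Prop where
  internal : DirectSum.IsInternal Ag
  mul_mem : ∀ g h : G, ∀ a ∈ Ag g, ∀ b ∈ Ag h, a * b ∈ Ag (g * h)
  regular : ∀ (n : ℕ) (g : Fin n → G), ∃ a : Fin n → A,
      (∀ i, a i ∈ Ag (g i)) ∧ tupProd a ≠ 0
  comm : ∀ (n : ℕ) (g : Fin n → G) (σ : Equiv.Perm (Fin n)), Admissible g σ →
      ∀ a : Fin n → A, (∀ i, a i ∈ Ag (g i)) →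
        tupProd a = (θ n g σ : F) • tupProd (a ∘ σ)

/-- `θ` is a `G`-commutation function: it satisfies the cocycle condition
`θ(ḡ,σ)·θ(ḡ^σ,τ) = θ(ḡ,στ)` and (equivalently to the substitution and multiplicativity
conditions of Lemma 2.6 of Aljadeff–David) it is realized as the commutation function of a
regular `G`-grading on some `F`-algebra. -/
def IsGCommFunction (F : Type) [Field F] (G : Type) [Group G] [DecidableEq G]
    (θ : ∀ n : ℕ, (Fin n → G) → Equiv.Perm (Fin n) → Fˣ) : Prop :=
  (∀ (n : ℕ) (g : Fin n → G) (σ τ : Equiv.Perm (Fin n)),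
      Admissible g σ → Admissible (g ∘ σ) τ →
      θ n g σ * θ n (g ∘ σ) τ = θ n g (σ * τ)) ∧
  ∃ (A : Type) (_ : Ring A) (_ : Algebra F A) (Ag : G → Submodule F A),
    IsRegularGradingWith F G A Ag θ

/-- `θ(g,h)` for commuting `g, h`: the value of `θ` on the pair `(g,h)` with the
transposition `(1 2)`. -/
def pairTheta {F : Type} [Field F] {G : Type} [Group G]
    (θ : ∀ n : ℕ, (Fin n → G) → Equiv.Perm (Fin n) → Fˣ) (g h : G) : Fˣ :=
  θ 2 ![g, h] (Equiv.swap 0 1)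

open scoped TensorProduct

/-- `Ag` is a `G`-grading of the algebra `A`. -/
structure IsGrading (F : Type) [Field F] (G : Type) [Group G] [DecidableEq G]
    (A : Type) [Ring A] [Algebra F A] (Ag : G → Submodule F A) : Prop where
  internal : DirectSum.IsInternal Ag
  mul_mem : ∀ g h : G, ∀ a ∈ Ag g, ∀ b ∈ Ag h, a * b ∈ Ag (g * h)

/-- `f` is a `G`-graded identity of the `G`-graded algebra `(A, Ag)`: it vanishes under
every admissible (graded) substitution, where the variable `x_{g,i}` may only be replaced
by elements of `A_g`. -/
def IsGradedIdentity (F : Type) [Field F] (G : Type) [Group G]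
    {A : Type} [Ring A] [Algebra F A] (Ag : G → Submodule F A)
    (f : FreeAlgebra F (G × ℕ)) : Prop :=
  ∀ v : G × ℕ → A, (∀ p, v p ∈ Ag p.1) → FreeAlgebra.lift F v f = 0

/-- The `(g,h)`-component `A_g ⊗ B_h` of `A ⊗ B`; for the envelope we take `g = h`. -/
noncomputable def tensorComponent {F : Type} [Field F] {A B : Type} [Ring A] [Algebra F A]
    [Ring B] [Algebra F B] (p : Submodule F A) (q : Submodule F B) :
    Submodule F (A ⊗[F] B) :=
  LinearMap.range (TensorProduct.map p.subtype q.subtype)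

/-- The multilinear strongly homogeneous polynomial
`f = Σ_{σ ∈ Sym(ḡ)} λ_σ x_{g_{σ(1)},σ(1)} ⋯ x_{g_{σ(n)},σ(n)}` with coefficients `lam`. -/
noncomputable def multilinearPoly (F : Type) [Field F] (G : Type) [Group G] (n : ℕ)
    (g : Fin n → G) (lam : Equiv.Perm (Fin n) → F) : FreeAlgebra F (G × ℕ) :=
  ∑ σ : Equiv.Perm (Fin n), lam σ •
    tupProd (fun i => FreeAlgebra.ι F ((g (σ i), ((σ i : Fin n) : ℕ)) : G × ℕ))

/-!
Evaluated on pure tensors `a_j ⊗ b_j` with `a_j ∈ A_{g_j}`, each monomial of `f` gives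
`a_{σ(1)} ⋯ a_{σ(n)} ⊗ b_{σ(1)} ⋯ b_{σ(n)}`, and regularity rewrites the first factor as
`θ(ḡ,σ)⁻¹ a_1 ⋯ a_n`; hence `f(a ⊗ b) = a_1 ⋯ a_n ⊗ f^θ(b)`. By multilinearity it suffices
to evaluate `f` on pure tensors, which gives one direction, and choosing `a` with
`a_1 ⋯ a_n ≠ 0` (regularity again) gives the other, since `x ⊗ y = 0` forces `y = 0` for
`x ≠ 0` over a field.
-/

theorem tupProd_map {M N FF : Type*} [Monoid M] [Monoid N] [FunLike FF M N]
    [MonoidHomClass FF M N] (f : FF) {n : ℕ} (a : Fin n → M) :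
    f (tupProd a) = tupProd (fun i => f (a i)) := by
  rw [tupProd, tupProd, map_list_prod, List.map_ofFn]
  rfl

section

variable {F : Type} [Field F]

theorem tupProd_tmul {A B : Type} [Ring A] [Algebra F A] [Ring B] [Algebra F B] {n : ℕ}
    (a : Fin n → A) (b : Fin n → B) :
    tupProd (fun i => a i ⊗ₜ[F] b i) = tupProd a ⊗ₜ[F] tupProd b := by
  induction n with
  | zero => simp [tupProd, Algebra.TensorProduct.one_def]
  | succ m ih =>
    simp only [tupProd, List.ofFn_succ, List.prod_cons] at ih ⊢
    rw [ih, Algebra.TensorProduct.tmul_mul_tmul]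

theorem TensorProduct.eq_zero_of_tmul_eq_zero_right {A B : Type} [AddCommGroup A] [Module F A]
    [AddCommGroup B] [Module F B] {x : A} {y : B} (hx : x ≠ 0) (h : x ⊗ₜ[F] y = 0) :
    y = 0 := by
  obtain ⟨φ, hφ⟩ : ∃ φ : Module.Dual F A, φ x ≠ 0 := by
    by_contra! hc
    exact hx ((Module.forall_dual_apply_eq_zero_iff F x).mp hc)
  have h' : TensorProduct.lid F B (LinearMap.rTensor B φ (x ⊗ₜ[F] y)) = 0 := by
    rw [h, map_zero, map_zero]
  rw [LinearMap.rTensor_tmul, TensorProduct.lid_tmul] at h'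
  exact (smul_eq_zero.mp h').resolve_left hφ

theorem tmul_mem_tensorComponent {A B : Type} [Ring A] [Algebra F A] [Ring B] [Algebra F B]
    {p : Submodule F A} {q : Submodule F B} {a : A} {b : B} (ha : a ∈ p) (hb : b ∈ q) :
    a ⊗ₜ[F] b ∈ tensorComponent p q :=
  ⟨⟨a, ha⟩ ⊗ₜ ⟨b, hb⟩, TensorProduct.map_tmul _ _ _ _⟩

theorem MultilinearMap.map_eq_zero_of_forall_tmul {A B N : Type} [Ring A] [Algebra F A]
    [Ring B] [Algebra F B] [AddCommGroup N] [Module F N] {n : ℕ}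
    (f : MultilinearMap F (fun _ : Fin n => A ⊗[F] B) N)
    {p : Fin n → Submodule F A} {q : Fin n → Submodule F B}
    (hf : ∀ (a : Fin n → A) (b : Fin n → B), (∀ j, a j ∈ p j) → (∀ j, b j ∈ q j) →
      f (fun j => a j ⊗ₜ b j) = 0)
    (u : Fin n → A ⊗[F] B) (hu : ∀ j, u j ∈ tensorComponent (p j) (q j)) : f u = 0 := by
  choose t ht using fun j => LinearMap.mem_range.mp (hu j)
  choose S hS using fun j => TensorProduct.exists_finset (t j)
  have hu_sum : u = fun j => ∑ x ∈ S j, ((x.1 : A) ⊗ₜ[F] (x.2 : B)) := by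
    funext j
    simp [← ht j, hS j]
  rw [hu_sum, MultilinearMap.map_sum_finset]
  exact Finset.sum_eq_zero fun x _ =>
    hf (fun j => (x j).1) (fun j => (x j).2) (fun j => (x j).1.2) (fun j => (x j).2.2)

noncomputable def permSum (R : Type) [Ring R] [Algebra F R] (n : ℕ)
    (lam : Equiv.Perm (Fin n) → F) : MultilinearMap F (fun _ : Fin n => R) R :=
  ∑ σ : Equiv.Perm (Fin n), lam σ • (MultilinearMap.mkPiAlgebraFin F n R).domDomCongr σ

theorem permSum_apply {R : Type} [Ring R] [Algebra F R] {n : ℕ}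
    (lam : Equiv.Perm (Fin n) → F) (u : Fin n → R) :
    permSum R n lam u = ∑ σ : Equiv.Perm (Fin n), lam σ • tupProd (u ∘ σ) := by
  simp [permSum, tupProd, MultilinearMap.domDomCongr_apply, Function.comp_def]

variable {G : Type} [Group G]

theorem lift_multilinearPoly {R : Type} [Ring R] [Algebra F R] {n : ℕ} (g : Fin n → G)
    (lam : Equiv.Perm (Fin n) → F) (v : G × ℕ → R) :
    FreeAlgebra.lift F v (multilinearPoly F G n g lam)
      = permSum R n lam (fun j => v (g j, j)) := by
  rw [multilinearPoly, map_sum, permSum_apply]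
  refine Finset.sum_congr rfl fun σ _ => ?_
  rw [map_smul, tupProd_map]
  simp only [FreeAlgebra.lift_ι_apply, Function.comp_def]

theorem isGradedIdentity_multilinearPoly_iff {R : Type} [Ring R] [Algebra F R]
    {Rg : G → Submodule F R} {n : ℕ} (g : Fin n → G) (lam : Equiv.Perm (Fin n) → F) :
    IsGradedIdentity F G Rg (multilinearPoly F G n g lam) ↔
      ∀ u : Fin n → R, (∀ j, u j ∈ Rg (g j)) → permSum R n lam u = 0 := by
  classical
  simp only [IsGradedIdentity, lift_multilinearPoly]
  refine ⟨fun h u hu => ?_, fun h v hv => h _ fun j => hv (g j, j)⟩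
  -- extend `u` by zero to a graded substitution of all the variables `x_{h,i}`
  let v : G × ℕ → R := fun p =>
    if hp : p.2 < n then if p.1 = g ⟨p.2, hp⟩ then u ⟨p.2, hp⟩ else 0 else 0
  have hv : ∀ p, v p ∈ Rg p.1 := by
    rintro ⟨x, i⟩
    simp only [v]
    split_ifs with hi hx
    · exact hx ▸ hu _
    all_goals exact zero_mem _
  simpa [v] using h v hv

variable [DecidableEq G] {A B : Type} [Ring A] [Algebra F A] [Ring B] [Algebra F B]

theorem permSum_tmul {Ag : G → Submodule F A}
    {θ : ∀ n : ℕ, (Fin n → G) → Equiv.Perm (Fin n) → Fˣ} (hA : IsRegularGradingWith F G A Ag θ)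
    {n : ℕ} {g : Fin n → G} {lam : Equiv.Perm (Fin n) → F}
    (hsupp : ∀ σ : Equiv.Perm (Fin n), ¬ Admissible g σ → lam σ = 0)
    (a : Fin n → A) (ha : ∀ i, a i ∈ Ag (g i)) (b : Fin n → B) :
    permSum (A ⊗[F] B) n lam (fun j => a j ⊗ₜ b j)
      = tupProd a ⊗ₜ permSum B n (fun σ => lam σ * ((θ n g σ)⁻¹ : Fˣ)) b := by
  rw [permSum_apply, permSum_apply, TensorProduct.tmul_sum]
  refine Finset.sum_congr rfl fun σ _ => ?_
  by_cases hσ : Admissible g σ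
  · have hcomm : tupProd (a ∘ σ) = (((θ n g σ)⁻¹ : Fˣ) : F) • tupProd a := by
      rw [hA.comm n g σ hσ a ha, smul_smul, ← Units.val_mul, inv_mul_cancel, Units.val_one,
        one_smul]
    rw [show (fun j => a j ⊗ₜ[F] b j) ∘ σ = fun i => (a ∘ σ) i ⊗ₜ[F] (b ∘ σ) i from rfl,
      tupProd_tmul, hcomm, TensorProduct.smul_tmul, TensorProduct.tmul_smul,
      TensorProduct.tmul_smul, smul_smul, mul_comm]
  · simp [hsupp σ hσ]

end

theorem envelope_identity_iff_general (F : Type) [Field F] (G : Type) [Group G]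
    [DecidableEq G]
    (A B : Type) [Ring A] [Algebra F A] [Ring B] [Algebra F B]
    (Ag : G → Submodule F A) (Bg : G → Submodule F B)
    (θ : ∀ n : ℕ, (Fin n → G) → Equiv.Perm (Fin n) → Fˣ)
    (hA : IsRegularGradingWith F G A Ag θ)
    (n : ℕ) (g : Fin n → G) (lam : Equiv.Perm (Fin n) → F)
    (hsupp : ∀ σ : Equiv.Perm (Fin n), ¬ Admissible g σ → lam σ = 0) :
    IsGradedIdentity F G Bg
        (multilinearPoly F G n g (fun σ => lam σ * ((θ n g σ)⁻¹ : Fˣ))) ↔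
      IsGradedIdentity F G (fun x => tensorComponent (Ag x) (Bg x))
        (multilinearPoly F G n g lam) := by
  rw [isGradedIdentity_multilinearPoly_iff, isGradedIdentity_multilinearPoly_iff]
  constructor
  · intro hB u hu
    refine (permSum (A ⊗[F] B) n lam).map_eq_zero_of_forall_tmul (fun a b ha hb => ?_) u hu
    rw [permSum_tmul hA hsupp a ha, hB b hb, TensorProduct.tmul_zero]
  · intro hAB b hb
    obtain ⟨a, ha, hprod⟩ := hA.regular n g
    have h := hAB _ fun j => tmul_mem_tensorComponent (ha j) (hb j)
    rw [permSum_tmul hA hsupp a ha] at h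
    exact TensorProduct.eq_zero_of_tmul_eq_zero_right hprod h

/-- `f^θ ∈ Id_G(B)` if and only if `f ∈ Id_G(A ⊗̂ B)`, where `A ⊗̂ B` is the
`G`-envelope `(A ⊗̂ B)_g = A_g ⊗ B_g` and `f^θ` is obtained from the multilinear polynomial
`f` by twisting each coefficient `λ_σ` into `λ_σ θ(ḡ,σ)⁻¹`. -/
theorem envelope_identity_iff (F : Type) [Field F] [CharZero F] (G : Type) [Group G]
    [Fintype G] [DecidableEq G]
    (A B : Type) [Ring A] [Algebra F A] [Ring B] [Algebra F B]
    (Ag : G → Submodule F A) (Bg : G → Submodule F B)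
    (θ : ∀ n : ℕ, (Fin n → G) → Equiv.Perm (Fin n) → Fˣ)
    (hA : IsRegularGradingWith F G A Ag θ) (hB : IsGrading F G B Bg)
    (n : ℕ) (g : Fin n → G) (lam : Equiv.Perm (Fin n) → F)
    (hsupp : ∀ σ : Equiv.Perm (Fin n), ¬ Admissible g σ → lam σ = 0) :
    IsGradedIdentity F G Bg
        (multilinearPoly F G n g (fun σ => lam σ * ((θ n g σ)⁻¹ : Fˣ))) ↔
      IsGradedIdentity F G (fun x => tensorComponent (Ag x) (Bg x))
        (multilinearPoly F G n g lam) :=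
  envelope_identity_iff_general F G A B Ag Bg θ hA n g lam hsupp
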